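/- Let k ≥ 1 be a natural number and let w_1, …, w_k be integers with each w_r ∈ {0, 1}. Define f : ℕ → ℤ by f(x) = Σ_{r=1}^{k} w_r · Σ_{j=0}^{r} (−1)^{r−j} · C(2j,j) · C(k−j, r−j) · C(x+j, 2j). Then f(x+1) − f(x) ≡ 2 (mod 4) for every x ∈ {0, 1, …, k−1} if and only if there exists a set T with {2^0, 2^1, …, 2^{⌊log₂ k⌋}} ⊆ T ⊆ {1, 2, …, k} such that for every r ∈ {1, …, k}, w_r ≡ Σ_{j∈T} C(k−r, j−r) (mod 2). -/

import Mathlib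

/-!
Since `C(2j,j) = 2 C(2j-1,j-1)` for `j ≥ 1`, Pascal's rule gives `f(x+1) - f(x) = 2 D(x)`, and
modulo 2 the signs disappear, so `D(x) ≡ Σ_j C(2j-1,j-1) C(x+j,2j-1) u_j` where
`u_j = Σ_r C(k-j,r-j) w_r`. By Lucas' theorem `C(2j-1,j-1)` is odd exactly when `j = 2^a`, and
then `C(x+2^a, 2^(a+1)-1)` is odd exactly when `2^a` is the exact power of 2 dividing `x+1`.
Hence `D(x)` is odd iff `u_(2^v₂(x+1))` is, and the condition says `u_(2^a) = 1` whenever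
`2^a ≤ k`. Finally `w ↦ u` is an involution over `𝔽₂` (its square has entries
`C(k-j,s-j) 2^(s-j)`), so `w` is recovered from `u` and one takes `T = {s : u_s = 1}`.
-/

open Finset

namespace Nat

theorem odd_choose_iff (n k : ℕ) :
    Odd (n.choose k) ↔ Odd ((n % 2).choose (k % 2)) ∧ Odd ((n / 2).choose (k / 2)) := by
  have h := @Choose.choose_modEq_choose_mod_mul_choose_div_nat n k 2 ⟨prime_two⟩
  rw [← odd_mul, odd_iff, odd_iff, h]

theorem odd_choose_two_pow_sub_one_iff (n b : ℕ) : Odd (n.choose (2 ^ b - 1)) ↔ 2 ^ b ∣ n + 1 := by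
  induction b generalizing n with
  | zero => simp
  | succ b ih =>
    have h2b : 0 < 2 ^ b := Nat.two_pow_pos b
    rw [odd_choose_iff, pow_succ, show (2 ^ b * 2 - 1) % 2 = 1 by omega,
      show (2 ^ b * 2 - 1) / 2 = 2 ^ b - 1 by omega, choose_one_right, ih]
    rcases n.even_or_odd' with ⟨m, rfl | rfl⟩
    · refine iff_of_false (fun h => ?_) (fun h => ?_)
      · simp at h
      · have := (dvd_mul_left 2 (2 ^ b)).trans h
        omega
    · rw [show (2 * m + 1) % 2 = 1 by omega, show (2 * m + 1) / 2 = m by omega,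
        show 2 * m + 1 + 1 = (m + 1) * 2 by ring, Nat.mul_dvd_mul_iff_right two_pos]
      simp

theorem odd_choose_two_mul_sub_one_iff {j : ℕ} (hj : 0 < j) :
    Odd ((2 * j - 1).choose (j - 1)) ↔ ∃ a, j = 2 ^ a := by
  induction j using Nat.strong_induction_on with
  | _ j ih =>
    rcases j.even_or_odd' with ⟨i, rfl | rfl⟩
    · have hi : 0 < i := by omega
      rw [odd_choose_iff, show (2 * (2 * i) - 1) % 2 = 1 by omega,
        show (2 * i - 1) % 2 = 1 by omega, show (2 * (2 * i) - 1) / 2 = 2 * i - 1 by omega,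
        show (2 * i - 1) / 2 = i - 1 by omega, ih i (by omega) hi]
      constructor
      · rintro ⟨-, a, rfl⟩
        exact ⟨a + 1, by rw [pow_succ]; ring⟩
      · rintro ⟨a, ha⟩
        rcases a with _ | a
        · omega
        · refine ⟨by decide, a, ?_⟩
          rw [pow_succ] at ha
          omega
    · rcases Nat.eq_zero_or_pos i with rfl | hi
      · exact ⟨fun _ => ⟨0, rfl⟩, fun _ => by decide⟩
      rw [odd_choose_iff, show (2 * (2 * i + 1) - 1) % 2 = 1 by omega,
        show (2 * i + 1 - 1) % 2 = 0 by omega, show (2 * (2 * i + 1) - 1) / 2 = 2 * i by omega,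
        show (2 * i + 1 - 1) / 2 = i by omega, ← centralBinom_eq_two_mul_choose]
      have heven := (even_iff_two_dvd.mpr (two_dvd_centralBinom_of_one_le hi))
      simp only [Nat.not_odd_iff_even.mpr heven, and_false, false_iff, not_exists]
      intro a ha
      rcases a with _ | a
      · omega
      · rw [pow_succ] at ha; omega

theorem two_pow_succ_dvd_add_two_pow_iff (x a : ℕ) :
    2 ^ (a + 1) ∣ x + 2 ^ a ↔ 2 ^ a ∣ x ∧ ¬ 2 ^ (a + 1) ∣ x := by
  by_cases hx : 2 ^ a ∣ x
  · obtain ⟨m, rfl⟩ := hx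
    rw [pow_succ, ← mul_add_one, Nat.mul_dvd_mul_iff_left (Nat.two_pow_pos a),
      Nat.mul_dvd_mul_iff_left (Nat.two_pow_pos a)]
    simp only [dvd_mul_right, true_and]
    omega
  · refine iff_of_false (fun h => hx ?_) (fun h => hx h.1)
    exact (Nat.dvd_add_left (dvd_refl _)).mp ((pow_dvd_pow 2 a.le_succ).trans h)

theorem odd_choose_add_two_pow_iff (x a : ℕ) :
    Odd ((x + 2 ^ a).choose (2 * 2 ^ a - 1)) ↔ padicValNat 2 (x + 1) = a := by
  rw [show 2 * 2 ^ a - 1 = 2 ^ (a + 1) - 1 by rw [pow_succ, mul_comm],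
    odd_choose_two_pow_sub_one_iff, add_right_comm, two_pow_succ_dvd_add_two_pow_iff,
    padicValNat_dvd_iff_le x.add_one_ne_zero, padicValNat_dvd_iff_le x.add_one_ne_zero]
  omega

theorem odd_choose_mul_choose_iff (x : ℕ) {j : ℕ} (hj : 0 < j) :
    Odd ((2 * j - 1).choose (j - 1) * (x + j).choose (2 * j - 1)) ↔
      j = 2 ^ padicValNat 2 (x + 1) := by
  rw [odd_mul, odd_choose_two_mul_sub_one_iff hj]
  constructor
  · rintro ⟨⟨a, rfl⟩, h⟩
    rw [(odd_choose_add_two_pow_iff x a).mp h]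
  · rintro rfl
    exact ⟨⟨_, rfl⟩, (odd_choose_add_two_pow_iff x _).mpr rfl⟩

theorem sum_range_choose_mul_choose (n m : ℕ) :
    ∑ t ∈ range (m + 1), n.choose t * (n - t).choose (m - t) = n.choose m * 2 ^ m := by
  rw [← sum_range_choose, mul_sum]
  refine sum_congr rfl fun t ht => ?_
  rw [choose_mul (Nat.lt_succ_iff.mp (mem_range.mp ht))]

theorem sum_Icc_choose_mul_choose {j s k : ℕ} (hjs : j ≤ s) :
    ∑ r ∈ Icc j s, (k - j).choose (r - j) * (k - r).choose (s - r) =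
      (k - j).choose (s - j) * 2 ^ (s - j) := by
  rw [← sum_range_choose_mul_choose, ← Ico_add_one_right_eq_Icc, sum_Ico_eq_sum_range,
    show s + 1 - j = s - j + 1 by omega]
  refine sum_congr rfl fun t _ => ?_
  rw [show k - (j + t) = k - j - t by omega, show s - (j + t) = s - j - t by omega,
    Nat.add_sub_cancel_left]

end Nat

theorem pow_padicValNat_le {p n : ℕ} (hn : n ≠ 0) : p ^ padicValNat p n ≤ n :=
  Nat.le_of_dvd (Nat.pos_of_ne_zero hn) pow_padicValNat_dvd

theorem forall_lt_padicValNat_iff {k : ℕ} (hk : k ≠ 0) (P : ℕ → Prop) :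
    (∀ x < k, P (padicValNat 2 (x + 1))) ↔ ∀ a ≤ Nat.log 2 k, P a := by
  refine ⟨fun h a ha => ?_, fun h x hx => h _ ?_⟩
  · have hak := Nat.pow_le_of_le_log hk ha
    have := h (2 ^ a - 1) (by omega)
    rwa [Nat.sub_add_cancel Nat.one_le_two_pow, padicValNat.prime_pow] at this
  · exact Nat.le_log_of_pow_le one_lt_two ((pow_padicValNat_le x.add_one_ne_zero).trans hx)

section UpperBinomialTransform

variable {R : Type*}

def upperBinomialTransform [Semiring R] (k : ℕ) (u : ℕ → R) (j : ℕ) : R :=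
  ∑ r ∈ Icc j k, ((k - j).choose (r - j) : R) * u r

theorem upperBinomialTransform_congr [Semiring R] {k j : ℕ} {u v : ℕ → R}
    (h : ∀ r ∈ Icc j k, u r = v r) :
    upperBinomialTransform k u j = upperBinomialTransform k v j :=
  sum_congr rfl fun r hr => by rw [h r hr]

theorem sum_Icc_mul_sum_Icc_choose [CommSemiring R] (a k : ℕ) (u g : ℕ → R) :
    ∑ r ∈ Icc a k, u r * ∑ j ∈ Icc a r, ((k - j).choose (r - j) : R) * g j =
      ∑ j ∈ Icc a k, g j * upperBinomialTransform k u j := by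
  simp_rw [upperBinomialTransform, mul_sum]
  rw [sum_comm' (t' := Icc a k) (s' := fun j => Icc j k) (fun r j => by
    simp only [mem_Icc]; omega)]
  exact sum_congr rfl fun j _ => sum_congr rfl fun r _ => by ring

theorem upperBinomialTransform_involutive [CommSemiring R] [CharP R 2] {k j : ℕ} (hjk : j ≤ k)
    (u : ℕ → R) :
    upperBinomialTransform k (upperBinomialTransform k u) j = u j := by
  have htwo : (2 : R) = 0 := by exact_mod_cast CharP.cast_eq_zero R 2
  calc upperBinomialTransform k (upperBinomialTransform k u) j
      = ∑ s ∈ Icc j k, (∑ r ∈ Icc j s, (k - j).choose (r - j) * (k - r).choose (s - r) : ℕ) *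
          u s := by
        simp only [upperBinomialTransform, Nat.cast_sum, mul_sum, sum_mul]
        rw [sum_comm' (t' := Icc j k) (s' := fun s => Icc j s)]
        · refine sum_congr rfl fun s _ => sum_congr rfl fun r _ => ?_
          push_cast
          ring
        · intro r s
          simp only [mem_Icc]
          omega
    _ = ∑ s ∈ Icc j k, ((k - j).choose (s - j) * 2 ^ (s - j) : ℕ) * u s :=
        sum_congr rfl fun s hs => by
          rw [Nat.sum_Icc_choose_mul_choose (mem_Icc.mp hs).1]
    _ = u j := by
        rw [sum_eq_single_of_mem j (mem_Icc.mpr ⟨le_rfl, hjk⟩) fun s hs hsj => ?_]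
        · simp
        · rw [Nat.cast_mul, Nat.cast_pow, Nat.cast_ofNat, htwo,
            zero_pow (by have := (mem_Icc.mp hs).1; omega)]
          simp

end UpperBinomialTransform

def johnsonEigenvalue (k : ℕ) (w : ℕ → ℤ) (x : ℕ) : ℤ :=
  ∑ r ∈ Icc 1 k, w r * ∑ j ∈ range (r + 1), (-1 : ℤ) ^ (r - j) *
    ((2 * j).choose j : ℤ) * ((k - j).choose (r - j) : ℤ) * ((x + j).choose (2 * j) : ℤ)

theorem choose_two_mul_mul_choose_succ_sub (x : ℕ) {j : ℕ} (hj : 0 < j) :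
    ((2 * j).choose j : ℤ) * ((x + 1 + j).choose (2 * j) - (x + j).choose (2 * j)) =
      2 * ((2 * j - 1).choose (j - 1) * (x + j).choose (2 * j - 1) : ℕ) := by
  obtain ⟨i, rfl⟩ : ∃ i, j = i + 1 := ⟨j - 1, by omega⟩
  have hcentral : (2 * (i + 1)).choose (i + 1) = 2 * (2 * i + 1).choose i := by
    rw [show 2 * (i + 1) = 2 * i + 1 + 1 by ring, Nat.choose_succ_succ, Nat.choose_symm_half]
    ring
  rw [hcentral, show 2 * (i + 1) - 1 = 2 * i + 1 by omega, Nat.add_sub_cancel,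
    show x + 1 + (i + 1) = x + (i + 1) + 1 by ring, show 2 * (i + 1) = 2 * i + 1 + 1 by ring,
    Nat.choose_succ_succ' (x + (i + 1))]
  push_cast
  ring

theorem johnsonEigenvalue_succ_sub (k : ℕ) (w : ℕ → ℤ) (x : ℕ) :
    johnsonEigenvalue k w (x + 1) - johnsonEigenvalue k w x =
      2 * ∑ r ∈ Icc 1 k, w r * ∑ j ∈ Icc 1 r, (-1 : ℤ) ^ (r - j) * ((k - j).choose (r - j) : ℤ) *
        ((2 * j - 1).choose (j - 1) * (x + j).choose (2 * j - 1) : ℕ) := by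
  rw [johnsonEigenvalue, johnsonEigenvalue, ← sum_sub_distrib, mul_sum]
  refine sum_congr rfl fun r _ => ?_
  rw [← mul_sub, ← sum_sub_distrib, mul_left_comm, ← Ico_add_one_right_eq_Icc, range_eq_Ico,
    sum_eq_sum_Ico_succ_bot (Nat.zero_lt_succ r), zero_add, mul_sum]
  simp only [Nat.choose_zero_right, sub_self, mul_zero, zero_add]
  refine congrArg _ (sum_congr rfl fun j hj => ?_)
  linear_combination ((-1 : ℤ) ^ (r - j) * ((k - j).choose (r - j) : ℤ)) *
    choose_two_mul_mul_choose_succ_sub x (mem_Ico.mp hj).1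

theorem sum_Icc_choose_mul_choose_mul_eq_apply {k x : ℕ} (hx : x < k) (U : ℕ → ZMod 2) :
    ∑ j ∈ Icc 1 k, (((2 * j - 1).choose (j - 1) * (x + j).choose (2 * j - 1) : ℕ) : ZMod 2) * U j =
      U (2 ^ padicValNat 2 (x + 1)) := by
  have hmem : 2 ^ padicValNat 2 (x + 1) ∈ Icc 1 k :=
    mem_Icc.mpr ⟨Nat.one_le_two_pow, (pow_padicValNat_le x.add_one_ne_zero).trans hx⟩
  rw [sum_eq_single_of_mem _ hmem fun j hj hne => ?_]
  · rw [(ZMod.natCast_eq_one_iff_odd).mpr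
      ((Nat.odd_choose_mul_choose_iff x (Nat.two_pow_pos _)).mpr rfl), one_mul]
  · rw [(ZMod.natCast_eq_zero_iff_even).mpr (Nat.not_odd_iff_even.mp
      fun h => hne ((Nat.odd_choose_mul_choose_iff x (mem_Icc.mp hj).1).mp h)), zero_mul]

theorem johnsonEigenvalue_succ_sub_modEq_iff {k x : ℕ} (w : ℕ → ℤ) (hx : x < k) :
    johnsonEigenvalue k w (x + 1) - johnsonEigenvalue k w x ≡ 2 [ZMOD 4] ↔
      upperBinomialTransform k (fun r => (w r : ZMod 2)) (2 ^ padicValNat 2 (x + 1)) = 1 := by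
  rw [johnsonEigenvalue_succ_sub]
  set D := ∑ r ∈ Icc 1 k, w r * ∑ j ∈ Icc 1 r, (-1 : ℤ) ^ (r - j) *
    ((k - j).choose (r - j) : ℤ) * ((2 * j - 1).choose (j - 1) * (x + j).choose (2 * j - 1) : ℕ)
  have hD : (D : ZMod 2) = upperBinomialTransform k (fun r => (w r : ZMod 2))
      (2 ^ padicValNat 2 (x + 1)) := by
    rw [← sum_Icc_choose_mul_choose_mul_eq_apply hx (upperBinomialTransform k _),
      ← sum_Icc_mul_sum_Icc_choose]
    simp only [D, Int.cast_sum, Int.cast_mul, Int.cast_pow, Int.cast_neg, Int.cast_one,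
      Int.cast_natCast, CharTwo.neg_eq, one_pow, one_mul]
  have h2D : 2 * D ≡ 2 [ZMOD 4] ↔ D ≡ 1 [ZMOD 2] := by
    simp only [Int.ModEq]
    omega
  rw [h2D, ← hD, ← Int.cast_one (R := ZMod 2), ZMod.intCast_eq_intCast_iff]
  rfl

theorem intCast_sum_ite_choose {R : Type*} [Ring R] (k r : ℕ) {T : Finset ℕ}
    (hT : ∀ j ∈ T, j ≤ k) :
    ((∑ j ∈ T, if r ≤ j then ((k - r).choose (j - r) : ℤ) else 0 : ℤ) : R) =
      upperBinomialTransform k (fun s => if s ∈ T then 1 else 0) r := by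
  simp only [upperBinomialTransform, mul_ite, mul_one, mul_zero, Int.cast_sum, apply_ite Int.cast,
    Int.cast_natCast, Int.cast_zero]
  rw [← sum_filter, ← sum_filter]
  refine sum_congr (ext fun j => ?_) fun _ _ => rfl
  have := hT j
  simp only [mem_filter, mem_Icc]
  tauto

theorem exists_eq_upperBinomialTransform_indicator_iff {k : ℕ} (hk : k ≠ 0) (u : ℕ → ZMod 2) :
    (∃ T : Finset ℕ, (∀ a ≤ Nat.log 2 k, 2 ^ a ∈ T) ∧ T ⊆ Icc 1 k ∧
      ∀ r, 1 ≤ r → r ≤ k → u r = upperBinomialTransform k (fun s => if s ∈ T then 1 else 0) r) ↔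
    ∀ a ≤ Nat.log 2 k, upperBinomialTransform k u (2 ^ a) = 1 := by
  constructor
  · rintro ⟨T, hpow, -, hu⟩ a ha
    have hak := Nat.pow_le_of_le_log hk ha
    rw [upperBinomialTransform_congr fun r hr => hu r
        (Nat.one_le_two_pow.trans (mem_Icc.mp hr).1) (mem_Icc.mp hr).2,
      upperBinomialTransform_involutive hak, if_pos (hpow a ha)]
  · intro h
    refine ⟨(Icc 1 k).filter fun s => upperBinomialTransform k u s = 1, fun a ha => mem_filter.mpr
      ⟨mem_Icc.mpr ⟨Nat.one_le_two_pow, Nat.pow_le_of_le_log hk ha⟩, h a ha⟩,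
      filter_subset _ _, fun r hr hrk => ?_⟩
    have hbool : ∀ z : ZMod 2, (if z = 1 then 1 else 0) = z := by decide
    rw [← upperBinomialTransform_involutive hrk u]
    refine upperBinomialTransform_congr fun s hs => ?_
    have hs' : s ∈ Icc 1 k := mem_Icc.mpr ⟨hr.trans (mem_Icc.mp hs).1, (mem_Icc.mp hs).2⟩
    simp only [mem_filter, hs', true_and, hbool]

theorem stmt_17_general (k : ℕ) (hk : 1 ≤ k)
    (w : ℕ → ℤ)
    (f : ℕ → ℤ)
    (hf : ∀ x, f x = ∑ r ∈ Finset.Icc 1 k, w r *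
        ∑ j ∈ Finset.range (r + 1), (-1 : ℤ) ^ (r - j) *
          (Nat.choose (2 * j) j : ℤ) * (Nat.choose (k - j) (r - j) : ℤ) *
          (Nat.choose (x + j) (2 * j) : ℤ)) :
    (∀ x < k, f (x + 1) - f x ≡ 2 [ZMOD 4]) ↔
      (∃ T : Finset ℕ,
        (∀ a, a ≤ Nat.log 2 k → 2 ^ a ∈ T) ∧
        (T ⊆ Finset.Icc 1 k) ∧
        (∀ r, 1 ≤ r → r ≤ k →
          w r ≡ ∑ j ∈ T,
            (if r ≤ j then (Nat.choose (k - r) (j - r) : ℤ) else 0) [ZMOD 2])) := by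
  obtain rfl : f = johnsonEigenvalue k w := funext hf
  have hk0 : k ≠ 0 := by omega
  set U := upperBinomialTransform k fun r => (w r : ZMod 2)
  calc (∀ x < k, johnsonEigenvalue k w (x + 1) - johnsonEigenvalue k w x ≡ 2 [ZMOD 4])
      ↔ ∀ x < k, U (2 ^ padicValNat 2 (x + 1)) = 1 :=
        forall₂_congr fun x hx => johnsonEigenvalue_succ_sub_modEq_iff w hx
    _ ↔ ∀ a ≤ Nat.log 2 k, U (2 ^ a) = 1 := forall_lt_padicValNat_iff hk0 fun a => U (2 ^ a) = 1
    _ ↔ _ := (exists_eq_upperBinomialTransform_indicator_iff hk0 _).symm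
    _ ↔ _ := by
      refine exists_congr fun T => and_congr_right fun _ => and_congr_right fun hT => ?_
      refine forall₃_congr fun r _ _ => ?_
      rw [← intCast_sum_ite_choose k r fun j hj => (mem_Icc.mp (hT hj)).2]
      exact ZMod.intCast_eq_intCast_iff _ _ 2

/-- Construction of all graphs of the Johnson scheme `J(2k,k)` with perfect state transfer
at time `π/2` (0/1 weights `w_r`): `f(x+1) - f(x) ≡ 2 (mod 4)` for all `x ∈ {0,…,k-1}`
iff `w_r ≡ Σ_{j ∈ T} C(k-r, j-r) (mod 2)` for some set `T` with
`{2^0, …, 2^{⌊log₂ k⌋}} ⊆ T ⊆ {1,…,k}`. -/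
theorem stmt_17 (k : ℕ) (hk : 1 ≤ k)
    (w : ℕ → ℤ) (hw : ∀ r, 1 ≤ r → r ≤ k → w r = 0 ∨ w r = 1)
    (f : ℕ → ℤ)
    (hf : ∀ x, f x = ∑ r ∈ Finset.Icc 1 k, w r *
        ∑ j ∈ Finset.range (r + 1), (-1 : ℤ) ^ (r - j) *
          (Nat.choose (2 * j) j : ℤ) * (Nat.choose (k - j) (r - j) : ℤ) *
          (Nat.choose (x + j) (2 * j) : ℤ)) :
    (∀ x < k, f (x + 1) - f x ≡ 2 [ZMOD 4]) ↔
      (∃ T : Finset ℕ,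
        (∀ a, a ≤ Nat.log 2 k → 2 ^ a ∈ T) ∧
        (T ⊆ Finset.Icc 1 k) ∧
        (∀ r, 1 ≤ r → r ≤ k →
          w r ≡ ∑ j ∈ T,
            (if r ≤ j then (Nat.choose (k - r) (j - r) : ℤ) else 0) [ZMOD 2])) :=
  stmt_17_general k hk w f hf
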